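/- Let f be a homogeneous polynomial of degree m in d variables and let Σ be a d×d real matrix. Then ‖v(f(ΣX))‖ ≤ ‖Σ‖_op^m · ‖v(f(X))‖, where f(ΣX) denotes the polynomial obtained by substituting the linear transformation Σ applied to the variables. -/

import Mathlib

open MvPolynomial

/-- The exponent (monomial) associated to an index tuple `w : Fin k → Fin d`. -/
noncomputable def expOf {d k : ℕ} (w : Fin k → Fin d) : Fin d →₀ ℕ := ∑ i, Finsupp.single (w i) 1

/-- The number of index tuples giving the same monomial as `w`. -/
noncomputable def countOf {d k : ℕ} (w : Fin k → Fin d) : ℕ :=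
  Nat.card {w' : Fin k → Fin d // expOf w' = expOf w}

/-- Entry of the flattened symmetric coefficient tensor of a homogeneous degree-`k`
polynomial `f`: the coefficient of the corresponding monomial divided evenly among
all index tuples producing it.  This is the unique symmetric tensor `T(f)` with
`⟨T(f), X^{⊗k}⟩ = f(X)`, flattened into a vector indexed by `Fin k → Fin d`. -/
noncomputable def coeffVecEntry {d : ℕ} (k : ℕ) (f : MvPolynomial (Fin d) ℝ)
    (w : Fin k → Fin d) : ℝ :=
  f.coeff (expOf w) / (countOf w)

/-- Euclidean norm `‖v(f)‖` of the flattened symmetric coefficient tensor of `f`,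
viewed as a homogeneous polynomial of degree `k`. -/
noncomputable def vnorm {d : ℕ} (k : ℕ) (f : MvPolynomial (Fin d) ℝ) : ℝ :=
  Real.sqrt (∑ w : Fin k → Fin d, (coeffVecEntry k f w)^2)

/-- Operator (spectral) norm of a real matrix, via its action on Euclidean space. -/
noncomputable def specNorm {d : ℕ} (M : Matrix (Fin d) (Fin d) ℝ) : ℝ :=
  ‖Matrix.toEuclideanCLM (𝕜 := ℝ) M‖

/-!
The coefficient tensor `c` of `f` is the symmetric tensor with
`f = ∑_w c_w X_{w 1} ⋯ X_{w m}`. Substituting `X ↦ ΣX` in this representation gives a new one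
whose tensor is `(Σᵀ)^{⊗m} c`; since this tensor is again symmetric, it is the coefficient tensor
of `f(ΣX)`. The `ℓ²` operator norm is submultiplicative under Kronecker products, because
`A ⊗ B = (A ⊗ 1)(1 ⊗ B)` and both factors are block diagonal up to a reindexing; hence
`‖(Σᵀ)^{⊗m}‖ ≤ ‖Σ‖^m`.
-/

namespace Matrix

open scoped Matrix.Norms.L2Operator Kronecker

variable {𝕜 : Type*} [RCLike 𝕜] {l m n o : Type*}

theorem sum_norm_sq_mulVec_le [Fintype m] [Fintype n] [DecidableEq n] (A : Matrix m n 𝕜)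
    (x : n → 𝕜) :
    ∑ i, ‖(A *ᵥ x) i‖ ^ 2 ≤ ‖A‖ ^ 2 * ∑ j, ‖x j‖ ^ 2 := by
  have h := pow_le_pow_left₀ (norm_nonneg _) (A.l2_opNorm_mulVec (WithLp.toLp 2 x)) 2
  rwa [mul_pow, EuclideanSpace.norm_sq_eq, EuclideanSpace.norm_sq_eq] at h

theorem l2_opNorm_le_of_sum_norm_sq_le [Fintype m] [Fintype n] [DecidableEq n] {A : Matrix m n 𝕜}
    {c : ℝ} (hc : 0 ≤ c)
    (h : ∀ x : n → 𝕜, ∑ i, ‖(A *ᵥ x) i‖ ^ 2 ≤ c ^ 2 * ∑ j, ‖x j‖ ^ 2) : ‖A‖ ≤ c := by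
  rw [l2_opNorm_def]
  refine ContinuousLinearMap.opNorm_le_bound _ hc fun x => ?_
  rw [← sq_le_sq₀ (norm_nonneg _) (by positivity), mul_pow, EuclideanSpace.norm_sq_eq,
    EuclideanSpace.norm_sq_eq]
  exact h x

theorem l2_opNorm_reindex_le [Fintype l] [Fintype m] [Fintype n] [Fintype o] [DecidableEq n]
    [DecidableEq o] (e₁ : m ≃ l) (e₂ : n ≃ o) (A : Matrix m n 𝕜) : ‖reindex e₁ e₂ A‖ ≤ ‖A‖ := by
  refine l2_opNorm_le_of_sum_norm_sq_le (norm_nonneg _) fun x => ?_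
  rw [reindex_apply, submatrix_mulVec_equiv]
  simp only [Function.comp_apply, Equiv.symm_symm]
  rw [Equiv.sum_comp e₁.symm (fun i => ‖(A *ᵥ (x ∘ e₂)) i‖ ^ 2),
    ← Equiv.sum_comp e₂ (fun j => ‖x j‖ ^ 2)]
  exact sum_norm_sq_mulVec_le A (x ∘ e₂)

theorem blockDiagonal_mulVec [Fintype n] [Fintype o] [DecidableEq o] (M : o → Matrix m n 𝕜)
    (x : n × o → 𝕜) (i : m) (k : o) :
    (blockDiagonal M *ᵥ x) (i, k) = (M k *ᵥ fun j => x (j, k)) i := by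
  simp [mulVec, dotProduct, blockDiagonal_apply, Fintype.sum_prod_type, ite_mul]

theorem l2_opNorm_blockDiagonal_le [Fintype m] [Fintype n] [Fintype o] [DecidableEq n]
    [DecidableEq o] {M : o → Matrix m n 𝕜} {c : ℝ} (hc : 0 ≤ c) (hM : ∀ k, ‖M k‖ ≤ c) :
    ‖blockDiagonal M‖ ≤ c := by
  refine l2_opNorm_le_of_sum_norm_sq_le hc fun x => ?_
  simp only [Fintype.sum_prod_type_right, blockDiagonal_mulVec]
  rw [Finset.mul_sum]
  gcongr with k
  exact (sum_norm_sq_mulVec_le _ _).trans (by gcongr; exact hM k)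

theorem l2_opNorm_kronecker_le [Fintype l] [Fintype m] [Fintype n] [Fintype o]
    [DecidableEq m] [DecidableEq n] [DecidableEq o]
    (A : Matrix l m 𝕜) (B : Matrix n o 𝕜) : ‖A ⊗ₖ B‖ ≤ ‖A‖ * ‖B‖ := by
  have hAB : A ⊗ₖ B = A ⊗ₖ (1 : Matrix n n 𝕜) * (1 : Matrix m m 𝕜) ⊗ₖ B := by
    rw [← mul_kronecker_mul, Matrix.mul_one, Matrix.one_mul]
  rw [hAB]
  refine (l2_opNorm_mul _ _).trans (mul_le_mul ?_ ?_ (norm_nonneg _) (norm_nonneg _))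
  · rw [kronecker_one]
    exact l2_opNorm_blockDiagonal_le (norm_nonneg _) fun _ => le_rfl
  · rw [one_kronecker]
    exact (l2_opNorm_reindex_le _ _ _).trans
      (l2_opNorm_blockDiagonal_le (norm_nonneg _) fun _ => le_rfl)

def kroneckerPow {α : Type*} [CommMonoid α] (M : Matrix m n α) (k : ℕ) :
    Matrix (Fin k → m) (Fin k → n) α :=
  of fun v w => ∏ i, M (v i) (w i)

theorem kroneckerPow_succ {α : Type*} [CommMonoid α] (M : Matrix m n α) (k : ℕ) :
    kroneckerPow M (k + 1) =
      reindex (Fin.consEquiv fun _ => m) (Fin.consEquiv fun _ => n) (M ⊗ₖ kroneckerPow M k) := by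
  ext v w
  simp [kroneckerPow, Fin.prod_univ_succ, Fin.consEquiv, Fin.tail]

theorem l2_opNorm_kroneckerPow_le [Fintype m] [Fintype n] [DecidableEq m] [DecidableEq n]
    (M : Matrix m n 𝕜) (k : ℕ) :
    ‖kroneckerPow M k‖ ≤ ‖M‖ ^ k := by
  induction k with
  | zero =>
    refine l2_opNorm_le_of_sum_norm_sq_le zero_le_one fun x => ?_
    simp [kroneckerPow, mulVec, dotProduct]
  | succ k ih =>
    rw [kroneckerPow_succ, pow_succ']
    exact (l2_opNorm_reindex_le _ _ _).trans <| (l2_opNorm_kronecker_le _ _).trans (by gcongr)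

end Matrix

open Matrix
open scoped Matrix.Norms.L2Operator

section

variable {d k : ℕ}

theorem expOf_comp_perm (w : Fin k → Fin d) (σ : Equiv.Perm (Fin k)) :
    expOf (w ∘ σ) = expOf w :=
  Equiv.sum_comp σ fun i => Finsupp.single (w i) 1

theorem expOf_apply (w : Fin k → Fin d) (j : Fin d) :
    expOf w j = Fintype.card {i // w i = j} := by
  classical
  rw [expOf, Finsupp.finsetSum_apply, Fintype.card_subtype, Finset.card_filter]
  simp [Finsupp.single_apply]

theorem exists_perm_of_expOf_eq {w w' : Fin k → Fin d} (h : expOf w' = expOf w) :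
    ∃ σ : Equiv.Perm (Fin k), w' = w ∘ σ := by
  have hfib : ∀ j, {i // w' i = j} ≃ {i // w i = j} := fun j =>
    Fintype.equivOfCardEq <| by rw [← expOf_apply, ← expOf_apply, h]
  exact ⟨Equiv.ofFiberEquiv hfib, funext fun i => (Equiv.ofFiberEquiv_map hfib i).symm⟩

theorem expOf_cons (j : Fin d) (w : Fin k → Fin d) :
    expOf (Fin.cons j w : Fin (k + 1) → Fin d) = Finsupp.single j 1 + expOf w := by
  simp [expOf, Fin.sum_univ_succ]

theorem exists_expOf_eq (e : Fin d →₀ ℕ) (he : e.degree = k) :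
    ∃ w : Fin k → Fin d, expOf w = e := by
  induction k generalizing e with
  | zero => exact ⟨Fin.elim0, by simp_all [expOf, Finsupp.degree_eq_zero_iff]⟩
  | succ k ih =>
    obtain ⟨j, hj⟩ : ∃ j, e j ≠ 0 := by
      by_contra! h
      simp [show e = 0 from Finsupp.ext h] at he
    have hle : Finsupp.single j 1 ≤ e :=
      Finsupp.single_le_iff.mpr (Nat.one_le_iff_ne_zero.mpr hj)
    have hdeg := congrArg Finsupp.degree (add_tsub_cancel_of_le hle)
    rw [map_add, Finsupp.degree_single, he] at hdeg
    obtain ⟨w, hw⟩ := ih (e - Finsupp.single j 1) (by omega)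
    exact ⟨Fin.cons j w, by rw [expOf_cons, hw, add_tsub_cancel_of_le hle]⟩

variable {R ι : Type*}

def IsSymmetricTensor (u : (Fin k → ι) → R) : Prop :=
  ∀ (σ : Equiv.Perm (Fin k)) (w : Fin k → ι), u (w ∘ σ) = u w

theorem IsSymmetricTensor.apply_eq_of_expOf_eq {u : (Fin k → Fin d) → R}
    (hu : IsSymmetricTensor u) {w w' : Fin k → Fin d} (h : expOf w' = expOf w) : u w' = u w := by
  obtain ⟨σ, rfl⟩ := exists_perm_of_expOf_eq h
  exact hu σ w

theorem IsSymmetricTensor.kroneckerPow_mulVec {ι' : Type*} [CommSemiring R] [Fintype ι]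
    {u : (Fin k → ι) → R} (hu : IsSymmetricTensor u) (A : Matrix ι' ι R) :
    IsSymmetricTensor (kroneckerPow A k *ᵥ u) := by
  intro σ w
  simp only [mulVec, dotProduct, kroneckerPow, of_apply]
  refine Fintype.sum_equiv (Equiv.arrowCongr σ (Equiv.refl ι)) _ _ fun v => ?_
  change _ = (∏ i, A (w i) (v (σ.symm i))) * u (v ∘ σ.symm)
  rw [hu σ.symm v, ← Equiv.prod_comp σ fun i => A (w i) (v (σ.symm i))]
  simp

theorem isSymmetricTensor_coeffVecEntry (f : MvPolynomial (Fin d) ℝ) :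
    IsSymmetricTensor (coeffVecEntry k f) := by
  intro σ w
  simp only [coeffVecEntry, countOf, expOf_comp_perm]

theorem countOf_pos (w : Fin k → Fin d) : 0 < countOf w :=
  have : Nonempty {w' // expOf w' = expOf w} := ⟨⟨w, rfl⟩⟩
  Nat.card_pos

/-- The polynomial `⟨u, X^{⊗k}⟩`. -/
noncomputable def polyOfTensor [CommSemiring R] (u : (Fin k → Fin d) → R) :
    MvPolynomial (Fin d) R :=
  ∑ w, monomial (expOf w) (u w)

theorem IsSymmetricTensor.coeff_polyOfTensor [CommSemiring R] {u : (Fin k → Fin d) → R}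
    (hu : IsSymmetricTensor u) (w : Fin k → Fin d) :
    (polyOfTensor u).coeff (expOf w) = countOf w • u w := by
  classical
  simp only [polyOfTensor, coeff_sum, coeff_monomial]
  rw [← Finset.sum_filter, Finset.sum_congr rfl fun w' hw' =>
    hu.apply_eq_of_expOf_eq (Finset.mem_filter.1 hw').2, Finset.sum_const, countOf,
    Nat.card_eq_fintype_card, Fintype.card_subtype]

theorem coeffVecEntry_polyOfTensor {u : (Fin k → Fin d) → ℝ} (hu : IsSymmetricTensor u) :
    coeffVecEntry k (polyOfTensor u) = u := by
  funext w
  rw [coeffVecEntry, hu.coeff_polyOfTensor, nsmul_eq_mul,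
    mul_div_cancel_left₀ _ (Nat.cast_ne_zero.2 (countOf_pos w).ne')]

theorem polyOfTensor_coeffVecEntry {f : MvPolynomial (Fin d) ℝ} (hf : f.IsHomogeneous k) :
    polyOfTensor (coeffVecEntry k f) = f := by
  ext e
  by_cases he : ∃ w : Fin k → Fin d, expOf w = e
  · obtain ⟨w, rfl⟩ := he
    rw [(isSymmetricTensor_coeffVecEntry f).coeff_polyOfTensor, coeffVecEntry, nsmul_eq_mul,
      mul_div_cancel₀ _ (Nat.cast_ne_zero.2 (countOf_pos w).ne')]
  · simp only [not_exists] at he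
    have hdeg : e.degree ≠ k := fun h => (exists_expOf_eq e h).elim fun w hw => he w hw
    simp [hf.coeff_eq_zero hdeg, polyOfTensor, coeff_sum, coeff_monomial, he]

theorem monomial_expOf [CommSemiring R] (w : Fin k → Fin d) (a : R) :
    monomial (expOf w) a = C a * ∏ i, X (w i) := by
  rw [expOf, monomial_sum_index]
  rfl

theorem aeval_polyOfTensor {d' : ℕ} [CommSemiring R] (M : Matrix (Fin d) (Fin d') R)
    (u : (Fin k → Fin d) → R) :
    aeval (fun i => ∑ j, C (M i j) * X j) (polyOfTensor u) =
      polyOfTensor (kroneckerPow Mᵀ k *ᵥ u) := by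
  have hterm : ∀ w, aeval (fun i => ∑ j, C (M i j) * X j) (monomial (expOf w) (u w)) =
      ∑ v, monomial (expOf v) ((∏ i, M (w i) (v i)) * u w) := fun w => by
    simp only [monomial_expOf, map_mul, aeval_C, map_prod, aeval_X, Finset.prod_univ_sum,
      Finset.mul_sum, Finset.prod_mul_distrib, algebraMap_eq]
    refine Finset.sum_congr rfl fun v _ => ?_
    ring
  simp only [polyOfTensor, map_sum, hterm, mulVec, dotProduct, kroneckerPow, of_apply,
    transpose_apply]
  exact Finset.sum_comm

theorem coeffVecEntry_aeval {d' : ℕ} {f : MvPolynomial (Fin d) ℝ} (hf : f.IsHomogeneous k)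
    (M : Matrix (Fin d) (Fin d') ℝ) :
    coeffVecEntry k (aeval (fun i => ∑ j, C (M i j) * X j) f) =
      kroneckerPow Mᵀ k *ᵥ coeffVecEntry k f := by
  conv_lhs => rw [← polyOfTensor_coeffVecEntry hf]
  rw [aeval_polyOfTensor, coeffVecEntry_polyOfTensor
    ((isSymmetricTensor_coeffVecEntry f).kroneckerPow_mulVec _)]

theorem vnorm_eq_norm (f : MvPolynomial (Fin d) ℝ) :
    vnorm k f = ‖(WithLp.toLp 2 (coeffVecEntry k f) : EuclideanSpace ℝ (Fin k → Fin d))‖ := by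
  simp [vnorm, EuclideanSpace.norm_eq]

end

/-- For a homogeneous degree-`m` polynomial `f` and a matrix `Σ`:
`‖v(f(ΣX))‖ ≤ ‖Σ‖_op^m · ‖v(f)‖`, where `f(ΣX)` substitutes `X ↦ ΣX`. -/
theorem vnorm_linear_transform {d m : ℕ} (f : MvPolynomial (Fin d) ℝ)
    (hf : f.IsHomogeneous m) (M : Matrix (Fin d) (Fin d) ℝ) :
    vnorm m (MvPolynomial.aeval
        (fun i => ∑ j, MvPolynomial.C (M i j) * MvPolynomial.X j) f)
      ≤ specNorm M ^ m * vnorm m f := by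
  have hMt : ‖Mᵀ‖ = ‖M‖ := by
    rw [← conjTranspose_eq_transpose_of_trivial, l2_opNorm_conjTranspose]
  rw [vnorm_eq_norm, vnorm_eq_norm, coeffVecEntry_aeval hf, specNorm, l2_opNorm_toEuclideanCLM,
    ← hMt]
  calc _ ≤ ‖kroneckerPow Mᵀ m‖ * ‖WithLp.toLp 2 (coeffVecEntry m f)‖ :=
        l2_opNorm_mulVec (kroneckerPow Mᵀ m) (WithLp.toLp 2 (coeffVecEntry m f))
    _ ≤ _ := by gcongr; exact l2_opNorm_kroneckerPow_le _ _
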